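/- The Euclidean diameter of the unit ℓ₁-ball in ℝ^n equals 2, and the quantity ψ(L_n) defined as the maximum spectral norm over full-rank n×n submatrices M of the (row-normalized) facet matrix of L_n satisfies 1/√n ≤ ψ(L_n) ≤ √n; consequently the condition number η(L_n) = ψ(L_n)·D(L_n)/ξ(L_n) with ξ(L_n) = 2/√n lies in the interval [1, n]. -/

import Mathlib

open InnerProductSpace Finset

noncomputable section

abbrev Euc (n : ℕ) := EuclideanSpace ℝ (Fin n)

/-- The all-ones vector. -/
def ones (n : ℕ) : Euc n := WithLp.toLp 2 (fun _ : Fin n => (1 : ℝ))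

/-- The unit simplex. -/
def unitSimplex (n : ℕ) : Set (Euc n) := {x | (∀ i, 0 ≤ x i) ∧ ∑ i, x i = 1}

/-- The simplex ball. -/
def simplexBall (n : ℕ) (x : Euc n) (d : ℝ) : Set (Euc n) :=
  {y | ∃ l ∈ unitSimplex n, y = (x - d • ones n) + ((n : ℝ) * d) • l}

/-- The unit l1 ball. -/
def l1Ball (n : ℕ) : Set (Euc n) := {x | ∑ i, |x i| ≤ 1}

/-- Spectral norm of a square real matrix, as operator norm on Euclidean space. -/
def specNorm (n : ℕ) (M : Matrix (Fin n) (Fin n) ℝ) : ℝ :=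
  ‖LinearMap.toContinuousLinearMap (Matrix.toEuclideanLin M)‖

/-- Set of spectral norms of full-rank submatrices with entries ±1/√n. -/
def psiSet (n : ℕ) : Set ℝ :=
  {r | ∃ M : Matrix (Fin n) (Fin n) ℝ,
    (∀ i j, M i j = (Real.sqrt n)⁻¹ ∨ M i j = -(Real.sqrt n)⁻¹) ∧
    M.rank = n ∧ r = specNorm n M}

/-! Every `x` in the ℓ₁-ball has `‖x‖₂ ≤ ‖x‖₁ ≤ 1`, so the diameter is at most `2`, attained by
`±e₀`. For a matrix with entries `±1/√n`, each entry is bounded by the operator norm, and the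
operator norm is bounded by the Frobenius norm `√(n² · 1/n) = √n`. The supremum defining `ψ` is
over a nonempty set because the staircase sign matrix (`1` on and below the diagonal, `-1` above)
is nonsingular: consecutive rows differ by `2eᵢ`. -/

open scoped Matrix Matrix.Norms.L2Operator

lemma EuclideanSpace.norm_le_sum_norm {ι 𝕜 : Type*} [Fintype ι] [RCLike 𝕜]
    (x : EuclideanSpace 𝕜 ι) : ‖x‖ ≤ ∑ i, ‖x i‖ := by
  rw [EuclideanSpace.norm_eq, Real.sqrt_le_left (by positivity)]
  exact sum_sq_le_sq_sum_of_nonneg fun _ _ ↦ norm_nonneg _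

lemma isGreatest_norm_sub_of_subset_closedBall {E : Type*} [NormedAddCommGroup E]
    [NormedSpace ℝ E] {S : Set E} (hS : S ⊆ Metric.closedBall 0 1) {u : E} (hu : u ∈ S)
    (hnu : -u ∈ S) (hu1 : ‖u‖ = 1) :
    IsGreatest {r : ℝ | ∃ x ∈ S, ∃ y ∈ S, r = ‖x - y‖} 2 := by
  refine ⟨⟨u, hu, -u, hnu, ?_⟩, ?_⟩
  · rw [sub_neg_eq_add, ← two_smul ℝ u, norm_smul, hu1]
    norm_num
  · rintro r ⟨x, hx, y, hy, rfl⟩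
    have hx1 := mem_closedBall_zero_iff.mp (hS hx)
    have hy1 := mem_closedBall_zero_iff.mp (hS hy)
    linarith [norm_sub_le x y]

lemma l1Ball_subset_closedBall (n : ℕ) : l1Ball n ⊆ Metric.closedBall 0 1 := fun x hx ↦
  mem_closedBall_zero_iff.mpr ((EuclideanSpace.norm_le_sum_norm x).trans hx)

lemma neg_mem_l1Ball {n : ℕ} {x : Euc n} (hx : x ∈ l1Ball n) : -x ∈ l1Ball n := by
  simpa [l1Ball] using hx

lemma single_one_mem_l1Ball {n : ℕ} (i : Fin n) : EuclideanSpace.single i (1 : ℝ) ∈ l1Ball n := by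
  simp [l1Ball, PiLp.single_apply, apply_ite]

lemma isGreatest_l1Ball_diameter {n : ℕ} (hn : 0 < n) :
    IsGreatest {r : ℝ | ∃ x ∈ l1Ball n, ∃ y ∈ l1Ball n, r = ‖x - y‖} 2 :=
  isGreatest_norm_sub_of_subset_closedBall (l1Ball_subset_closedBall n)
    (single_one_mem_l1Ball ⟨0, hn⟩) (neg_mem_l1Ball (single_one_mem_l1Ball _)) (by simp)

namespace Matrix

variable {m n 𝕜 : Type*} [Fintype m] [Fintype n] [DecidableEq n] [RCLike 𝕜]

lemma norm_apply_le_l2_opNorm (A : Matrix m n 𝕜) (i : m) (j : n) : ‖A i j‖ ≤ ‖A‖ := by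
  set e : EuclideanSpace 𝕜 n := EuclideanSpace.single j 1
  calc ‖A i j‖ = ‖(EuclideanSpace.equiv m 𝕜).symm (A *ᵥ e) i‖  := by simp [e]
    _ ≤ ‖(EuclideanSpace.equiv m 𝕜).symm (A *ᵥ e)‖ := PiLp.norm_apply_le _ i
    _ ≤ ‖A‖ := by simpa [e] using A.l2_opNorm_mulVec e

lemma l2_opNorm_le_sqrt_sum_sq (A : Matrix m n 𝕜) :
    ‖A‖ ≤ √(∑ i, ∑ j, ‖A i j‖ ^ 2) := by
  rw [l2_opNorm_def]
  refine ContinuousLinearMap.opNorm_le_bound _ (Real.sqrt_nonneg _) fun x ↦ ?_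
  have hrow : ∀ i, ‖(A *ᵥ x) i‖ ^ 2 ≤ (∑ j, ‖A i j‖ ^ 2) * ‖x‖ ^ 2 := fun i ↦ by
    rw [EuclideanSpace.norm_sq_eq]
    calc ‖(A *ᵥ x) i‖ ^ 2 ≤ (∑ j, ‖A i j‖ * ‖x j‖) ^ 2 := by
          gcongr
          exact (norm_sum_le _ _).trans (by simp [norm_mul])
      _ ≤ (∑ j, ‖A i j‖ ^ 2) * ∑ j, ‖x j‖ ^ 2 := sum_mul_sq_le_sq_mul_sq _ _ _
  rw [← Real.sqrt_sq (norm_nonneg x), ← Real.sqrt_mul (by positivity)]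
  apply Real.le_sqrt_of_sq_le
  rw [EuclideanSpace.norm_sq_eq, Finset.sum_mul]
  exact Finset.sum_le_sum fun i _ ↦ hrow i

lemma l2_opNorm_le_of_norm_apply_le {c : ℝ} (hc : 0 ≤ c) (A : Matrix m n 𝕜)
    (hA : ∀ i j, ‖A i j‖ ≤ c) : ‖A‖ ≤ √(Fintype.card m * Fintype.card n) * c :=
  calc ‖A‖ ≤ √(∑ i, ∑ j, ‖A i j‖ ^ 2) := A.l2_opNorm_le_sqrt_sum_sq
    _ ≤ √(∑ _i : m, ∑ _j : n, c ^ 2) := by gcongr with i _ j; exact hA i j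
    _ = √(Fintype.card m * Fintype.card n) * c := by
      simp only [Finset.sum_const, Finset.card_univ, nsmul_eq_mul, ← mul_assoc]
      rw [Real.sqrt_mul (by positivity), Real.sqrt_sq hc]

end Matrix

def signStaircase (n : ℕ) : Matrix (Fin n) (Fin n) ℝ :=
  Matrix.of fun i j ↦ if j ≤ i then 1 else -1

lemma signStaircase_mulVec_succ_sub_castSucc {m : ℕ} (x : Fin (m + 1) → ℝ) (i : Fin m) :
    (signStaircase (m + 1) *ᵥ x) i.succ - (signStaircase (m + 1) *ᵥ x) i.castSucc
      = 2 * x i.succ := by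
  have hrow : ∀ j, signStaircase (m + 1) i.succ j - signStaircase (m + 1) i.castSucc j
      = if j = i.succ then 2 else 0 := fun j ↦ by
    simp only [signStaircase, Matrix.of_apply, Fin.le_def, Fin.ext_iff, Fin.val_succ,
      Fin.val_castSucc]
    split_ifs <;> first | omega | norm_num
  simp only [Matrix.mulVec, dotProduct, ← Finset.sum_sub_distrib, ← sub_mul, hrow,
    ite_mul, zero_mul, Finset.sum_ite_eq', Finset.mem_univ, if_true]

lemma signStaircase_mulVec_injective (n : ℕ) : Function.Injective (signStaircase n).mulVec := by
  refine (injective_iff_map_eq_zero (signStaircase n).mulVecLin).mpr fun x hx ↦ ?_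
  change signStaircase n *ᵥ x = 0 at hx
  cases n with
  | zero => exact Subsingleton.elim _ _
  | succ m =>
    have htail : ∀ i : Fin m, x i.succ = 0 := fun i ↦ by
      have h := signStaircase_mulVec_succ_sub_castSucc x i
      simp only [hx, Pi.zero_apply, sub_zero] at h
      linarith
    have hhead : x 0 = 0 := by
      simpa [Matrix.mulVec, dotProduct, Fin.sum_univ_succ, htail, signStaircase] using congrFun hx 0
    funext j
    exact Fin.cases hhead htail j

lemma rank_signStaircase (n : ℕ) : (signStaircase n).rank = n := by
  rw [Matrix.rank_of_isUnit _ (Matrix.mulVec_injective_iff_isUnit.mp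
    (signStaircase_mulVec_injective n)), Fintype.card_fin]

lemma specNorm_eq_l2_opNorm (n : ℕ) (M : Matrix (Fin n) (Fin n) ℝ) : specNorm n M = ‖M‖ := rfl

section SignMatrix

variable {n : ℕ} {M : Matrix (Fin n) (Fin n) ℝ}

lemma abs_apply_of_forall_eq_or_eq_neg
    (hM : ∀ i j, M i j = (√n)⁻¹ ∨ M i j = -(√n)⁻¹) (i j : Fin n) : |M i j| = (√n)⁻¹ :=
  (abs_eq (by positivity)).mpr (hM i j)

lemma specNorm_le_sqrt (hM : ∀ i j, M i j = (√n)⁻¹ ∨ M i j = -(√n)⁻¹) :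
    specNorm n M ≤ √n := by
  rw [specNorm_eq_l2_opNorm]
  calc ‖M‖ ≤ √(n * n) * (√n)⁻¹ := by
        simpa using M.l2_opNorm_le_of_norm_apply_le (by positivity)
          fun i j ↦ (abs_apply_of_forall_eq_or_eq_neg hM i j).le
    _ = √n := by rw [Real.sqrt_mul_self n.cast_nonneg, ← div_eq_mul_inv, Real.div_sqrt]

lemma inv_sqrt_le_specNorm (hn : 0 < n) (hM : ∀ i j, M i j = (√n)⁻¹ ∨ M i j = -(√n)⁻¹) :
    (√n)⁻¹ ≤ specNorm n M := by
  rw [specNorm_eq_l2_opNorm, ← abs_apply_of_forall_eq_or_eq_neg hM ⟨0, hn⟩ ⟨0, hn⟩]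
  exact M.norm_apply_le_l2_opNorm _ _

end SignMatrix

lemma le_sqrt_of_mem_psiSet {n : ℕ} {r : ℝ} (hr : r ∈ psiSet n) : r ≤ √n := by
  obtain ⟨M, hM, -, rfl⟩ := hr
  exact specNorm_le_sqrt hM

lemma inv_sqrt_le_of_mem_psiSet {n : ℕ} (hn : 0 < n) {r : ℝ} (hr : r ∈ psiSet n) :
    (√n)⁻¹ ≤ r := by
  obtain ⟨M, hM, -, rfl⟩ := hr
  exact inv_sqrt_le_specNorm hn hM

lemma psiSet_nonempty {n : ℕ} (hn : 0 < n) : (psiSet n).Nonempty := by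
  have hc : (√n)⁻¹ ≠ 0 := by positivity
  refine ⟨_, (√n)⁻¹ • signStaircase n, fun i j ↦ ?_, ?_, rfl⟩
  · by_cases h : j ≤ i <;> simp [signStaircase, h]
  · rw [Matrix.rank_smul_of_mem_nonZeroDivisors _ (mem_nonZeroDivisors_of_ne_zero hc),
      rank_signStaircase]

theorem l1ball_diameter_and_condition_number (n : ℕ) (hn : 0 < n) :
    IsGreatest {r : ℝ | ∃ x ∈ l1Ball n, ∃ y ∈ l1Ball n, r = ‖x - y‖} 2 ∧
    (Real.sqrt n)⁻¹ ≤ sSup (psiSet n) ∧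
    sSup (psiSet n) ≤ Real.sqrt n ∧
    1 ≤ sSup (psiSet n) * 2 / (2 / Real.sqrt n) ∧
    sSup (psiSet n) * 2 / (2 / Real.sqrt n) ≤ (n : ℝ) := by
  obtain ⟨r, hr⟩ := psiSet_nonempty hn
  have hψ_upper : sSup (psiSet n) ≤ √n :=
    csSup_le ⟨r, hr⟩ fun _ ↦ le_sqrt_of_mem_psiSet
  have hψ_lower : (√n)⁻¹ ≤ sSup (psiSet n) :=
    (inv_sqrt_le_of_mem_psiSet hn hr).trans
      (le_csSup ⟨√n, fun _ ↦ le_sqrt_of_mem_psiSet⟩ hr)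
  have hsqrt : 0 < √(n : ℝ) := by positivity
  have hη : sSup (psiSet n) * 2 / (2 / √n) = sSup (psiSet n) * √n := by
    field_simp
  refine ⟨isGreatest_l1Ball_diameter hn, hψ_lower, hψ_upper, ?_, ?_⟩ <;> rw [hη]
  · calc (1 : ℝ) = (√n)⁻¹ * √n := (inv_mul_cancel₀ hsqrt.ne').symm
      _ ≤ sSup (psiSet n) * √n := by gcongr
  · calc sSup (psiSet n) * √n ≤ √n * √n := by gcongr
      _ = n := Real.mul_self_sqrt n.cast_nonneg
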